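/- For every real δ with 1 < δ < 2, the improper integral ∫_0^∞ x^{-δ} sin(x) dx converges and equals Γ(1-δ) cos(πδ/2), where Γ(1-δ) is the Gamma function at the negative argument 1-δ ∈ (-1,0). -/

import Mathlib

/-!
Integrating by parts against `1 - cos x`, which vanishes to second order at `0`, turns the
conditionally convergent integral into `δ ∫₀^∞ x^(-δ-1) (1 - cos x) dx`, which converges absolutely
for `0 < δ < 2`. Writing `Γ(δ+1) x^(-δ-1) = ∫₀^∞ t^δ e^(-xt) dt` and exchanging the integrals, the
inner integral is the Laplace transform `1 / (t (1 + t²))` of `1 - cos`, which leaves the beta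
integral `∫₀^∞ t^(δ-1) / (1 + t²) dt = π / (2 sin (πδ/2))`. So the limit is
`π / (2 sin (πδ/2) Γ(δ))`, which the reflection formula `Γ(δ) Γ(1-δ) = π / sin (πδ)` rewrites
as `Γ(1-δ) cos (πδ/2)`.
-/

open Real MeasureTheory intervalIntegral Filter Set Topology

lemma integrableOn_Ioc_of_abs_le_rpow {f : ℝ → ℝ} {b p C : ℝ}
    (hf : ContinuousOn f (Ioc 0 b)) (hp : -1 < p)
    (hbound : ∀ x ∈ Ioc 0 b, |f x| ≤ C * x ^ p) :
    IntegrableOn f (Ioc 0 b) :=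
  Integrable.mono' ((intervalIntegrable_rpow' hp).1.const_mul C)
    (hf.aestronglyMeasurable measurableSet_Ioc)
    ((ae_restrict_iff' measurableSet_Ioc).2 (.of_forall hbound))

lemma integrableOn_Ioi_of_abs_le_rpow {f : ℝ → ℝ} {p q C D : ℝ}
    (hf : ContinuousOn f (Ioi 0)) (hp : -1 < p) (hq : q < -1)
    (hnear : ∀ x ∈ Ioc 0 1, |f x| ≤ C * x ^ p)
    (hfar : ∀ x ∈ Ioi 1, |f x| ≤ D * x ^ q) : IntegrableOn f (Ioi 0) := by
  rw [← Ioc_union_Ioi_eq_Ioi zero_le_one]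
  refine (integrableOn_Ioc_of_abs_le_rpow (hf.mono Ioc_subset_Ioi_self) hp hnear).union ?_
  exact Integrable.mono' ((integrableOn_Ioi_rpow_of_lt hq one_pos).const_mul D)
    ((hf.mono (Ioi_subset_Ioi zero_le_one)).aestronglyMeasurable measurableSet_Ioi)
    ((ae_restrict_iff' measurableSet_Ioi).2 (.of_forall hfar))

lemma continuousOn_rpow_mul {g : ℝ → ℝ} (r : ℝ) (hg : Continuous g) :
    ContinuousOn (fun x : ℝ => x ^ r * g x) (Ioi 0) := fun x (hx : 0 < x) =>
  ((continuousAt_rpow_const x r (.inl hx.ne')).mul hg.continuousAt).continuousWithinAt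

lemma abs_rpow_neg_mul_one_sub_cos_le (δ : ℝ) {x : ℝ} (hx : 0 ≤ x) :
    |x ^ (-δ) * (1 - cos x)| ≤ x ^ (2 - δ) / 2 := by
  rcases hx.eq_or_lt with rfl | hx
  · simp only [cos_zero, sub_self, mul_zero, abs_zero]
    positivity
  rw [abs_of_nonneg (mul_nonneg (by positivity) (by linarith [cos_le_one x]))]
  calc x ^ (-δ) * (1 - cos x) ≤ x ^ (-δ) * (x ^ (2 : ℝ) / 2) := by
        rw [rpow_two]; gcongr; linarith [one_sub_sq_div_two_le_cos (x := x)]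
    _ = x ^ (2 - δ) / 2 := by rw [mul_div_assoc', ← rpow_add hx]; ring_nf

lemma abs_rpow_neg_mul_one_sub_cos_le_two_mul (δ : ℝ) {x : ℝ} (hx : 0 ≤ x) :
    |x ^ (-δ) * (1 - cos x)| ≤ 2 * x ^ (-δ) := by
  rw [abs_of_nonneg (mul_nonneg (by positivity) (by linarith [cos_le_one x])), mul_comm 2]
  gcongr
  linarith [neg_one_le_cos x]

lemma continuousOn_rpow_neg_mul_one_sub_cos {δ : ℝ} (hδ : δ < 2) :
    ContinuousOn (fun x : ℝ => x ^ (-δ) * (1 - cos x)) (Ici 0) := by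
  intro x (hx : 0 ≤ x)
  rcases hx.eq_or_lt with rfl | hx
  · have hbound : Tendsto (fun y : ℝ => y ^ (2 - δ) / 2) (𝓝[≥] 0) (𝓝 0) := by
      have := ((continuousAt_rpow_const 0 (2 - δ) (.inr (by linarith))).div_const 2).tendsto
      rw [zero_rpow (by linarith), zero_div] at this
      exact this.mono_left nhdsWithin_le_nhds
    rw [ContinuousWithinAt, cos_zero, sub_self, mul_zero]
    exact squeeze_zero_norm'
      (eventually_nhdsWithin_of_forall fun y hy => abs_rpow_neg_mul_one_sub_cos_le δ hy) hbound
  · exact ((continuousOn_rpow_mul _ (by fun_prop)).continuousAt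
      (Ioi_mem_nhds hx)).continuousWithinAt

lemma hasDerivAt_rpow_neg_mul_one_sub_cos (δ : ℝ) {x : ℝ} (hx : 0 < x) :
    HasDerivAt (fun x : ℝ => x ^ (-δ) * (1 - cos x))
      (x ^ (-δ) * sin x - δ * (x ^ (-δ - 1) * (1 - cos x))) x :=
  ((hasDerivAt_rpow_const (p := -δ) (.inl hx.ne')).mul
    ((hasDerivAt_cos x).const_sub 1)).congr_deriv (by ring)

lemma tendsto_rpow_neg_mul_one_sub_cos_atTop {δ : ℝ} (hδ : 0 < δ) :
    Tendsto (fun x : ℝ => x ^ (-δ) * (1 - cos x)) atTop (𝓝 0) := by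
  refine squeeze_zero_norm' ?_ (by simpa using (tendsto_rpow_neg_atTop hδ).const_mul 2)
  filter_upwards [eventually_ge_atTop 0] with x hx
  exact abs_rpow_neg_mul_one_sub_cos_le_two_mul δ hx

lemma abs_rpow_neg_sub_one_mul_one_sub_cos_le (δ : ℝ) {x : ℝ} (hx : 0 ≤ x) :
    |x ^ (-δ - 1) * (1 - cos x)| ≤ 1 / 2 * x ^ (1 - δ) := by
  have h := abs_rpow_neg_mul_one_sub_cos_le (δ + 1) hx
  rw [neg_add', show 2 - (δ + 1) = 1 - δ by ring] at h
  linarith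

lemma intervalIntegrable_rpow_neg_sub_one_mul_one_sub_cos {δ A : ℝ} (hδ : δ < 2)
    (hA : 0 ≤ A) :
    IntervalIntegrable (fun x : ℝ => x ^ (-δ - 1) * (1 - cos x)) volume 0 A :=
  (intervalIntegrable_iff_integrableOn_Ioc_of_le hA).2 <| integrableOn_Ioc_of_abs_le_rpow
    ((continuousOn_rpow_mul _ (by fun_prop)).mono Ioc_subset_Ioi_self) (by linarith)
    (fun x hx => abs_rpow_neg_sub_one_mul_one_sub_cos_le δ hx.1.le)

lemma integrableOn_rpow_neg_sub_one_mul_one_sub_cos {δ : ℝ} (hδ₀ : 0 < δ) (hδ₂ : δ < 2) :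
    IntegrableOn (fun x : ℝ => x ^ (-δ - 1) * (1 - cos x)) (Ioi 0) := by
  refine integrableOn_Ioi_of_abs_le_rpow (p := 1 - δ) (q := -δ - 1) (D := 2)
    (continuousOn_rpow_mul _ (by fun_prop)) (by linarith) (by linarith)
    (fun x hx => abs_rpow_neg_sub_one_mul_one_sub_cos_le δ hx.1.le)
    (fun x (hx : 1 < x) => ?_)
  simpa only [neg_add', sub_neg_eq_add] using
    abs_rpow_neg_mul_one_sub_cos_le_two_mul (δ + 1) (by linarith : (0 : ℝ) ≤ x)

lemma intervalIntegrable_rpow_neg_mul_sin {δ A : ℝ} (hδ : δ < 2) (hA : 0 ≤ A) :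
    IntervalIntegrable (fun x : ℝ => x ^ (-δ) * sin x) volume 0 A := by
  refine (intervalIntegrable_iff_integrableOn_Ioc_of_le hA).2 <| integrableOn_Ioc_of_abs_le_rpow
    (C := 1) (p := 1 - δ) ((continuousOn_rpow_mul _ continuous_sin).mono Ioc_subset_Ioi_self)
    (by linarith) (fun x ⟨hx, _⟩ => ?_)
  rw [abs_mul, abs_of_pos (by positivity), one_mul, sub_eq_neg_add, rpow_add hx, rpow_one]
  gcongr
  exact abs_sin_le_abs.trans_eq (abs_of_pos hx)

lemma integral_rpow_neg_mul_sin_eq {δ A : ℝ} (hδ : δ < 2) (hA : 0 ≤ A) :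
    ∫ x in 0..A, x ^ (-δ) * sin x
      = A ^ (-δ) * (1 - cos A) + δ * ∫ x in 0..A, x ^ (-δ - 1) * (1 - cos x) := by
  have hsin := intervalIntegrable_rpow_neg_mul_sin hδ hA
  have hcos := (intervalIntegrable_rpow_neg_sub_one_mul_one_sub_cos hδ hA).const_mul δ
  have hFTC := integral_eq_sub_of_hasDeriv_right_of_le hA
    ((continuousOn_rpow_neg_mul_one_sub_cos hδ).mono Icc_subset_Ici_self)
    (fun x hx => (hasDerivAt_rpow_neg_mul_one_sub_cos δ hx.1).hasDerivWithinAt) (hsin.sub hcos)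
  rw [integral_sub hsin hcos, intervalIntegral.integral_const_mul, cos_zero, sub_self, mul_zero,
    sub_zero] at hFTC
  linarith

lemma integral_rpow_mul_one_sub_rpow_neg {a : ℝ} (ha₀ : 0 < a) (ha₁ : a < 1) :
    ∫ x in (0 : ℝ)..1, x ^ (a - 1) * (1 - x) ^ (-a) = π / sin (π * a) := by
  have hbeta := Complex.Gamma_mul_Gamma_eq_betaIntegral (s := a) (t := (1 - a : ℝ))
    (by simpa using ha₀) (by simpa using ha₁)
  rw [show (a : ℂ) + (1 - a : ℝ) = 1 by push_cast; ring, Complex.Gamma_one, one_mul,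
    Complex.ofReal_sub, Complex.ofReal_one, Complex.Gamma_mul_Gamma_one_sub,
    Complex.betaIntegral] at hbeta
  have hintegrand :
      ∫ x in (0 : ℝ)..1, (x : ℂ) ^ ((a : ℂ) - 1) * (1 - (x : ℂ)) ^ (1 - (a : ℂ) - 1)
      = ∫ x in (0 : ℝ)..1, ((x ^ (a - 1) * (1 - x) ^ (-a) : ℝ) : ℂ) := by
    refine integral_congr fun x hx => ?_
    rw [uIcc_of_le zero_le_one] at hx
    rw [Complex.ofReal_mul, Complex.ofReal_cpow hx.1, Complex.ofReal_cpow (by linarith [hx.2])]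
    push_cast
    ring_nf
  rw [hintegrand, intervalIntegral.integral_ofReal, ← Complex.ofReal_mul, ← Complex.ofReal_sin,
    ← Complex.ofReal_div] at hbeta
  exact_mod_cast hbeta.symm

lemma image_div_one_add_Ioi : (fun u : ℝ => u / (1 + u)) '' Ioi 0 = Ioo 0 1 := by
  ext x
  constructor
  · rintro ⟨u, hu : 0 < u, rfl⟩
    exact ⟨by positivity, (div_lt_one (by linarith)).2 (by linarith)⟩
  · rintro ⟨hx₀, hx₁⟩
    refine ⟨x / (1 - x), div_pos hx₀ (by linarith), ?_⟩
    field_simp [(by linarith : 1 - x ≠ 0)]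
    ring

lemma integral_rpow_div_one_add {a : ℝ} (ha₀ : 0 < a) (ha₁ : a < 1) :
    ∫ u in Ioi (0 : ℝ), u ^ (a - 1) / (1 + u) = π / sin (π * a) := by
  have hderiv : ∀ u ∈ Ioi (0 : ℝ),
      HasDerivWithinAt (fun u : ℝ => u / (1 + u)) (1 / (1 + u) ^ 2) (Ioi 0) u := by
    intro u (hu : 0 < u)
    refine (((hasDerivAt_id u).div ((hasDerivAt_id u).const_add 1) (by positivity)).congr_deriv
      ?_).hasDerivWithinAt
    simp
  have hinj : InjOn (fun u : ℝ => u / (1 + u)) (Ioi 0) := by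
    intro u (hu : 0 < u) v (hv : 0 < v) h
    field_simp at h
    linarith
  have hsubst := integral_image_eq_integral_abs_deriv_smul measurableSet_Ioi hderiv hinj
    (fun x => x ^ (a - 1) * (1 - x) ^ (-a))
  rw [image_div_one_add_Ioi, ← integral_Ioc_eq_integral_Ioo, ← integral_of_le zero_le_one,
    integral_rpow_mul_one_sub_rpow_neg ha₀ ha₁] at hsubst
  rw [hsubst]
  refine setIntegral_congr_fun measurableSet_Ioi fun u (hu : 0 < u) => ?_
  have h1u : 0 < 1 + u := by linarith
  rw [show 1 - u / (1 + u) = (1 + u)⁻¹ by field_simp; ring, smul_eq_mul,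
    abs_of_pos (by positivity), div_rpow hu.le h1u.le, inv_rpow h1u.le,
    rpow_sub_one h1u.ne', rpow_neg h1u.le]
  have := rpow_pos_of_pos h1u a
  field_simp

lemma integral_rpow_div_one_add_sq {b : ℝ} (hb₀ : 0 < b) (hb₂ : b < 2) :
    ∫ t in Ioi (0 : ℝ), t ^ (b - 1) / (1 + t ^ 2) = π / (2 * sin (π * b / 2)) := by
  have hsubst := integral_comp_rpow_Ioi_of_pos (g := fun u => u ^ (b / 2 - 1) / (1 + u))
    two_pos
  rw [integral_rpow_div_one_add (by linarith) (by linarith)] at hsubst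
  have hintegrand : ∀ t ∈ Ioi (0 : ℝ), ((2 : ℝ) * t ^ ((2 : ℝ) - 1)) •
      ((t ^ (2 : ℝ)) ^ (b / 2 - 1) / (1 + t ^ (2 : ℝ))) = 2 * (t ^ (b - 1) / (1 + t ^ 2)) := by
    intro t (ht : 0 < t)
    have hexp : t ^ ((2 : ℝ) - 1) * t ^ (2 * (b / 2 - 1)) = t ^ (b - 1) := by
      rw [← rpow_add ht]; ring_nf
    rw [smul_eq_mul, ← rpow_mul ht.le, rpow_two, ← hexp]
    ring
  rw [setIntegral_congr_fun measurableSet_Ioi hintegrand, MeasureTheory.integral_const_mul]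
    at hsubst
  rw [mul_div_assoc, mul_comm 2, ← div_div, ← hsubst]
  ring

lemma integral_exp_neg_mul_mul_one_sub_cos {t : ℝ} (ht : 0 < t) :
    ∫ x in Ioi (0 : ℝ), exp (-(t * x)) * (1 - cos x) = 1 / (t * (1 + t ^ 2)) := by
  set a : ℂ := -t
  set b : ℂ := -t + Complex.I
  have ha : a.re < 0 := by simpa [a] using ht
  have hb : b.re < 0 := by simpa [b] using ht
  have hint : IntegrableOn (fun x : ℝ => Complex.exp (a * x) - Complex.exp (b * x)) (Ioi 0) :=
    (integrableOn_exp_mul_complex_Ioi ha 0).sub (integrableOn_exp_mul_complex_Ioi hb 0)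
  have hpart : ∀ x : ℝ, exp (-(t * x)) * (1 - cos x)
      = RCLike.re (Complex.exp (a * x) - Complex.exp (b * x)) := by
    intro x
    simp [a, b, Complex.exp_re, mul_sub]
  have hvalue :
      ∫ x in Ioi (0 : ℝ), (Complex.exp (a * x) - Complex.exp (b * x)) = b⁻¹ - a⁻¹ := by
    rw [integral_sub (integrableOn_exp_mul_complex_Ioi ha 0)
      (integrableOn_exp_mul_complex_Ioi hb 0), integral_exp_mul_complex_Ioi ha,
      integral_exp_mul_complex_Ioi hb]
    simp only [Complex.ofReal_zero, mul_zero, Complex.exp_zero]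
    ring
  simp_rw [hpart]
  rw [integral_re hint, hvalue, RCLike.re_to_complex]
  simp only [inv_neg, sub_neg_eq_add, Complex.add_re, Complex.inv_re, Complex.neg_re,
    Complex.ofReal_re, Complex.I_re, add_zero, Complex.normSq_apply, mul_neg, neg_mul, neg_neg,
    Complex.add_im, Complex.neg_im, Complex.ofReal_im, neg_zero, Complex.I_im, zero_add, mul_one,
    mul_zero, a, b]
  field_simp
  ring

lemma integral_rpow_mul_exp_neg_mul_Ioi_eq_Gamma_add_one {s r : ℝ} (hs : -1 < s) (hr : 0 < r) :
    ∫ t in Ioi (0 : ℝ), t ^ s * exp (-(r * t)) = Gamma (s + 1) * r ^ (-s - 1) := by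
  have hGamma := integral_rpow_mul_exp_neg_mul_Ioi (a := s + 1) (by linarith) hr
  rw [add_sub_cancel_right] at hGamma
  rw [hGamma, one_div, inv_rpow hr.le, ← rpow_neg hr.le, mul_comm]
  ring_nf

lemma integral_rpow_neg_sub_one_mul_one_sub_cos {δ : ℝ} (hδ₀ : 0 < δ) (hδ₂ : δ < 2) :
    ∫ x in Ioi (0 : ℝ), x ^ (-δ - 1) * (1 - cos x)
      = π / (2 * sin (π * δ / 2)) / Gamma (δ + 1) := by
  set H : ℝ → ℝ → ℝ := fun x t => t ^ δ * exp (-(x * t)) * (1 - cos x) with hH_def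
  have hH_nonneg : ∀ x t, 0 < t → 0 ≤ H x t := fun x t ht =>
    mul_nonneg (by positivity) (by linarith [cos_le_one x])
  have hslice_x : ∀ x ∈ Ioi (0 : ℝ),
      ∫ t in Ioi 0, H x t = Gamma (δ + 1) * (x ^ (-δ - 1) * (1 - cos x)) := by
    intro x (hx : 0 < x)
    rw [MeasureTheory.integral_mul_const,
      integral_rpow_mul_exp_neg_mul_Ioi_eq_Gamma_add_one (by linarith) hx]
    ring
  have hslice_t : ∀ t ∈ Ioi (0 : ℝ), ∫ x in Ioi 0, H x t = t ^ (δ - 1) / (1 + t ^ 2) := by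
    intro t (ht : 0 < t)
    simp_rw [hH_def, mul_assoc, mul_comm _ t, MeasureTheory.integral_const_mul,
      integral_exp_neg_mul_mul_one_sub_cos ht, rpow_sub_one ht.ne']
    field_simp
  have hH : Integrable (Function.uncurry H)
      ((volume.restrict (Ioi 0)).prod (volume.restrict (Ioi 0))) := by
    refine (integrable_prod_iff (by fun_prop)).2 ⟨?_, ?_⟩
    · refine (ae_restrict_iff' measurableSet_Ioi).2 (.of_forall fun x (hx : 0 < x) => ?_)
      have hGamma : IntegrableOn (fun t : ℝ => t ^ δ * exp (-(x * t))) (Ioi 0) :=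
        (integrableOn_rpow_mul_exp_neg_mul_rpow (s := δ) (by linarith) one_pos hx).congr_fun
          (fun t _ => by simp only [rpow_one, neg_mul]) measurableSet_Ioi
      exact hGamma.mul_const (1 - cos x)
    · refine ((integrableOn_rpow_neg_sub_one_mul_one_sub_cos hδ₀ hδ₂).const_mul
        (Gamma (δ + 1))).congr ?_
      refine (ae_restrict_iff' measurableSet_Ioi).2 (.of_forall fun x hx => ?_)
      simp only [Function.uncurry_apply_pair]
      rw [← hslice_x x hx]
      refine setIntegral_congr_fun measurableSet_Ioi fun t (ht : 0 < t) => ?_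
      exact (Real.norm_of_nonneg (hH_nonneg x t ht)).symm
  have hswap := integral_integral_swap hH
  rw [setIntegral_congr_fun measurableSet_Ioi hslice_x, MeasureTheory.integral_const_mul,
    setIntegral_congr_fun measurableSet_Ioi hslice_t, integral_rpow_div_one_add_sq hδ₀ hδ₂]
    at hswap
  rw [eq_div_iff (Gamma_pos_of_pos (by linarith)).ne', ← hswap, mul_comm]

lemma tendsto_integral_rpow_neg_mul_sin {δ : ℝ} (hδ₀ : 0 < δ) (hδ₂ : δ < 2) :
    Tendsto (fun A : ℝ => ∫ x in 0..A, x ^ (-δ) * sin x) atTop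
      (𝓝 (π / (2 * sin (π * δ / 2) * Gamma δ))) := by
  have hlim := (tendsto_rpow_neg_mul_one_sub_cos_atTop hδ₀).add
    ((intervalIntegral_tendsto_integral_Ioi 0
      (integrableOn_rpow_neg_sub_one_mul_one_sub_cos hδ₀ hδ₂) tendsto_id).const_mul δ)
  have hvalue : 0 + δ * (π / (2 * sin (π * δ / 2)) / Gamma (δ + 1))
      = π / (2 * sin (π * δ / 2) * Gamma δ) := by
    rw [zero_add, Gamma_add_one hδ₀.ne']
    field_simp
  rw [integral_rpow_neg_sub_one_mul_one_sub_cos hδ₀ hδ₂, hvalue] at hlim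
  refine hlim.congr' ?_
  filter_upwards [eventually_ge_atTop 0] with A hA
  exact (integral_rpow_neg_mul_sin_eq hδ₂ hA).symm

lemma Gamma_one_sub_mul_cos {δ : ℝ} (hδ : 0 < δ) (hsin : sin (π * δ / 2) ≠ 0)
    (hcos : cos (π * δ / 2) ≠ 0) :
    Gamma (1 - δ) * cos (π * δ / 2) = π / (2 * sin (π * δ / 2) * Gamma δ) := by
  have hΓ := (Gamma_pos_of_pos hδ).ne'
  have hrefl := Gamma_mul_Gamma_one_sub δ
  rw [show π * δ = 2 * (π * δ / 2) by ring, sin_two_mul,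
    eq_div_iff (mul_ne_zero (mul_ne_zero two_ne_zero hsin) hcos)] at hrefl
  rw [eq_div_iff (mul_ne_zero (mul_ne_zero two_ne_zero hsin) hΓ)]
  linear_combination hrefl

/-- Mellin transform of the sine function for exponents in `(1,2)`:
`∫_0^∞ x^{-δ} sin x dx = Γ(1-δ) cos(πδ/2)`, as an improper (limit of interval) integral. -/
theorem mellin_sin_extended (δ : ℝ) (hδ1 : 1 < δ) (hδ2 : δ < 2) :
    Tendsto (fun A : ℝ => ∫ x in (0 : ℝ)..A, x ^ (-δ) * Real.sin x) atTop
      (nhds (Real.Gamma (1 - δ) * Real.cos (π * δ / 2))) := by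
  have hsin : sin (π * δ / 2) ≠ 0 :=
    (sin_pos_of_pos_of_lt_pi (by positivity) (by nlinarith [pi_pos])).ne'
  have hcos : cos (π * δ / 2) ≠ 0 :=
    (cos_neg_of_pi_div_two_lt_of_lt (by nlinarith [pi_pos]) (by nlinarith [pi_pos])).ne
  rw [Gamma_one_sub_mul_cos (by linarith) hsin hcos]
  exact tendsto_integral_rpow_neg_mul_sin (by linarith) hδ2
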